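/- For every ρ ∈ (−1,1) with ρ ≠ 0 and every x ∈ ℝ, the Kolmogorov dependence statistic satisfies k(x) := sup_{y ∈ ℝ} |P(Y ≤ y | X > x) − P(Y ≤ y | X ≤ x)| = (1/(Φ(x)(1−Φ(x)))) · |∫_{−∞}^{y*} Φ((x − ρu)/√(1−ρ²)) φ(u) du − Φ(x)Φ(y*)|, where y* = x(1 − √(1−ρ²))/ρ. -/

import Mathlib

/-!
The reflection `(u, v) ↦ (ρu + √(1-ρ²)v, √(1-ρ²)u - ρv)` of `ℝ²` is a rotation composed with the
swap of coordinates, so it preserves the standard Gaussian measure. It maps `(U, V)` to a pair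
`(Y, W)` of independent standard normals with `U = ρY + √(1-ρ²)W`; integrating out `W` gives
`P(Y ≤ y, U ≤ x) = Φ₂(x, y) := ∫_{-∞}^y Φ((x-ρu)/√(1-ρ²)) φ(u) du` and `P(Y ≤ y) = Φ(y)`, so the
quantity under the supremum is `|Φ(x)Φ(y) - Φ₂(x, y)| / (Φ(x)(1-Φ(x)))`.

The function `H = Φ(x)Φ(·) - Φ₂(x, ·)` vanishes at `±∞` and has derivative
`φ(y)(Φ(x) - Φ((x-ρy)/√(1-ρ²)))`, whose sign is that of `ρ(y - y*)`. Hence `ρH` decreases up to `y*`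
and increases afterwards, and `|H|` attains its maximum at `y*`.
-/

open MeasureTheory Real

/-- The standard normal density `φ(u) = (2π)^{-1/2} exp(-u²/2)`. -/
noncomputable def stdNormalPDF (u : ℝ) : ℝ := (Real.sqrt (2 * π))⁻¹ * Real.exp (-u ^ 2 / 2)

/-- The standard normal CDF `Φ(x) = ∫_{-∞}^x φ(u) du`. -/
noncomputable def stdNormalCDF (x : ℝ) : ℝ := ∫ u in Set.Iic x, stdNormalPDF u

/-- `y* = x(1 − √(1−ρ²))/ρ`. -/
noncomputable def ystar (ρ x : ℝ) : ℝ := x * (1 - Real.sqrt (1 - ρ ^ 2)) / ρ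

open ProbabilityTheory Set Filter Topology

lemma stdNormalPDF_eq_gaussianPDFReal : stdNormalPDF = gaussianPDFReal 0 1 := by
  ext u
  simp [stdNormalPDF, gaussianPDFReal, neg_div]

lemma stdNormalPDF_pos (u : ℝ) : 0 < stdNormalPDF u := by
  rw [stdNormalPDF_eq_gaussianPDFReal]
  exact gaussianPDFReal_pos 0 1 u one_ne_zero

lemma stdNormalPDF_nonneg (u : ℝ) : 0 ≤ stdNormalPDF u := (stdNormalPDF_pos u).le

lemma continuous_stdNormalPDF : Continuous stdNormalPDF := by
  unfold stdNormalPDF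
  fun_prop

lemma integrable_stdNormalPDF : Integrable stdNormalPDF := by
  rw [stdNormalPDF_eq_gaussianPDFReal]
  exact integrable_gaussianPDFReal 0 1

lemma integral_stdNormalPDF : ∫ u, stdNormalPDF u = 1 := by
  rw [stdNormalPDF_eq_gaussianPDFReal]
  exact integral_gaussianPDFReal_eq_one 0 one_ne_zero

lemma gaussianReal_zero_one_real_apply (s : Set ℝ) :
    (gaussianReal 0 1).real s = ∫ u in s, stdNormalPDF u := by
  rw [measureReal_def, gaussianReal_apply_eq_integral 0 one_ne_zero,
    ← stdNormalPDF_eq_gaussianPDFReal, ENNReal.toReal_ofReal (integral_nonneg stdNormalPDF_nonneg)]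

lemma setIntegral_stdNormalPDF_pos {s : Set ℝ} (h : volume s ≠ 0) :
    0 < ∫ u in s, stdNormalPDF u := by
  refine (setIntegral_pos_iff_support_of_nonneg_ae (ae_of_all _ stdNormalPDF_nonneg)
    integrable_stdNormalPDF.integrableOn).2 ?_
  rwa [Function.support_eq_univ fun u => (stdNormalPDF_pos u).ne', univ_inter, pos_iff_ne_zero]

lemma one_sub_stdNormalCDF (x : ℝ) : 1 - stdNormalCDF x = ∫ u in Ioi x, stdNormalPDF u := by
  rw [← integral_stdNormalPDF, ← intervalIntegral.integral_Iic_add_Ioi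
    integrable_stdNormalPDF.integrableOn integrable_stdNormalPDF.integrableOn, stdNormalCDF,
    add_sub_cancel_left]

lemma stdNormalCDF_pos (x : ℝ) : 0 < stdNormalCDF x :=
  setIntegral_stdNormalPDF_pos (s := Iic x) (by simp)

lemma stdNormalCDF_lt_one (x : ℝ) : stdNormalCDF x < 1 := by
  have := setIntegral_stdNormalPDF_pos (s := Ioi x) (by simp)
  linarith [one_sub_stdNormalCDF x]

lemma hasDerivAt_setIntegral_Iic {g : ℝ → ℝ} (hg : Continuous g) (hgi : Integrable g) (y : ℝ) :
    HasDerivAt (fun t => ∫ u in Iic t, g u) (g y) y := by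
  have heq : (fun t => ∫ u in Iic t, g u)
      = fun t => (∫ u in (0 : ℝ)..t, g u) + ∫ u in Iic 0, g u := by
    ext t
    rw [← intervalIntegral.integral_Iic_sub_Iic hgi.integrableOn hgi.integrableOn, sub_add_cancel]
  rw [heq]
  exact (intervalIntegral.integral_hasDerivAt_right hgi.intervalIntegrable
    hg.aestronglyMeasurable.stronglyMeasurableAtFilter hg.continuousAt).add_const _

lemma tendsto_setIntegral_Iic_atTop {g : ℝ → ℝ} (hgi : Integrable g) :
    Tendsto (fun t => ∫ u in Iic t, g u) atTop (𝓝 (∫ u, g u)) := by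
  simpa [iUnion_Iic] using tendsto_setIntegral_of_monotone (fun t => measurableSet_Iic)
    (fun _ _ h => Iic_subset_Iic.2 h) (by simpa [iUnion_Iic] using hgi)

lemma hasDerivAt_stdNormalCDF (y : ℝ) : HasDerivAt stdNormalCDF (stdNormalPDF y) y :=
  hasDerivAt_setIntegral_Iic continuous_stdNormalPDF integrable_stdNormalPDF y

lemma continuous_stdNormalCDF : Continuous stdNormalCDF :=
  continuous_iff_continuousAt.2 fun y => (hasDerivAt_stdNormalCDF y).continuousAt

lemma monotone_stdNormalCDF : Monotone stdNormalCDF :=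
  monotone_of_hasDerivAt_nonneg hasDerivAt_stdNormalCDF stdNormalPDF_nonneg

lemma tendsto_stdNormalCDF_atBot : Tendsto stdNormalCDF atBot (𝓝 0) :=
  tendsto_integral_Iic_zero tendsto_id

lemma tendsto_stdNormalCDF_atTop : Tendsto stdNormalCDF atTop (𝓝 1) := by
  unfold stdNormalCDF
  simpa [integral_stdNormalPDF] using tendsto_setIntegral_Iic_atTop integrable_stdNormalPDF

lemma integrable_stdNormalCDF_comp_mul_stdNormalPDF {f : ℝ → ℝ} (hf : Measurable f) :
    Integrable (fun u => stdNormalCDF (f u) * stdNormalPDF u) := by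
  refine integrable_stdNormalPDF.mono' ?_ (ae_of_all _ fun u => ?_)
  · exact ((continuous_stdNormalCDF.measurable.comp hf).mul
      continuous_stdNormalPDF.measurable).aestronglyMeasurable
  · rw [norm_mul, Real.norm_of_nonneg (stdNormalCDF_pos _).le,
      Real.norm_of_nonneg (stdNormalPDF_nonneg u)]
    exact mul_le_of_le_one_left (stdNormalPDF_nonneg u) (stdNormalCDF_lt_one _).le

noncomputable def bivariateNormalCDF (ρ x y : ℝ) : ℝ :=
  ∫ u in Iic y, stdNormalCDF ((x - ρ * u) / √(1 - ρ ^ 2)) * stdNormalPDF u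

local notation "𝒩²" => Measure.prod (gaussianReal 0 1) (gaussianReal 0 1)

noncomputable def corrReflection (ρ : ℝ) (p : ℝ × ℝ) : ℝ × ℝ :=
  (ρ * p.1 + √(1 - ρ ^ 2) * p.2, √(1 - ρ ^ 2) * p.1 - ρ * p.2)

section GaussianPlane

variable {ρ : ℝ}

lemma measurePreserving_corrReflection (hρ : ρ ∈ Icc (-1) 1) :
    MeasurePreserving (corrReflection ρ) 𝒩² 𝒩² := by
  have hR : corrReflection ρ = ContinuousLinearMap.rotation (arcsin ρ) ∘ Prod.swap := by
    funext p
    simp only [corrReflection, Function.comp_apply, ContinuousLinearMap.rotation_apply,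
      Prod.fst_swap, Prod.snd_swap, sin_arcsin hρ.1 hρ.2, cos_arcsin, smul_eq_mul]
    ext <;> simp <;> ring
  refine ⟨by unfold corrReflection; fun_prop, ?_⟩
  rw [hR, ← Measure.map_map (by fun_prop) measurable_swap, Measure.prod_swap,
    IsGaussian.map_rotation_eq_self (by simp [integral_id_gaussianReal])]

lemma gaussianReal_prod_real_le_and_mem (a t : ℝ) {s : ℝ} (hs : 0 < s) {T : Set ℝ}
    (hT : MeasurableSet T) :
    𝒩².real {p | a * p.1 + s * p.2 ≤ t ∧ p.1 ∈ T}
      = ∫ u in T, stdNormalCDF ((t - a * u) / s) * stdNormalPDF u := by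
  have hS : MeasurableSet {p : ℝ × ℝ | a * p.1 + s * p.2 ≤ t ∧ p.1 ∈ T} := by measurability
  have hsection (u : ℝ) :
      gaussianReal 0 1 (Prod.mk u ⁻¹' {p | a * p.1 + s * p.2 ≤ t ∧ p.1 ∈ T})
        = T.indicator (fun u => ENNReal.ofReal (stdNormalCDF ((t - a * u) / s))) u := by
    by_cases hu : u ∈ T
    · have : Prod.mk u ⁻¹' {p | a * p.1 + s * p.2 ≤ t ∧ p.1 ∈ T} = Iic ((t - a * u) / s) := by
        ext v
        simp only [mem_preimage, mem_ofPred_eq, hu, and_true, mem_Iic, le_div_iff₀ hs]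
        constructor <;> intro h <;> linarith
      rw [this, indicator_of_mem hu, ← ofReal_measureReal, gaussianReal_zero_one_real_apply]
      rfl
    · simp [hu]
  have hmeas : Measurable fun u => stdNormalCDF ((t - a * u) / s) :=
    continuous_stdNormalCDF.measurable.comp (by fun_prop)
  rw [measureReal_def, Measure.prod_apply hS,
    lintegral_congr hsection, lintegral_indicator hT,
    gaussianReal_of_var_ne_zero 0 one_ne_zero, restrict_withDensity hT,
    lintegral_withDensity_eq_lintegral_mul _ (measurable_gaussianPDF 0 1) hmeas.ennreal_ofReal]
  have hdensity (u : ℝ) :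
      (gaussianPDF 0 1 * fun u => ENNReal.ofReal (stdNormalCDF ((t - a * u) / s))) u
        = ENNReal.ofReal (stdNormalCDF ((t - a * u) / s) * stdNormalPDF u) := by
    rw [Pi.mul_apply, gaussianPDF, ← stdNormalPDF_eq_gaussianPDFReal, mul_comm,
      ENNReal.ofReal_mul (stdNormalCDF_pos _).le]
  rw [lintegral_congr hdensity, ← ofReal_integral_eq_lintegral_ofReal, ENNReal.toReal_ofReal]
  · exact integral_nonneg fun u => mul_nonneg (stdNormalCDF_pos _).le (stdNormalPDF_nonneg u)
  · exact (integrable_stdNormalCDF_comp_mul_stdNormalPDF (by fun_prop)).integrableOn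
  · exact ae_of_all _ fun u => mul_nonneg (stdNormalCDF_pos _).le (stdNormalPDF_nonneg u)

lemma corrReflection_involutive_fst (hρ : ρ ∈ Icc (-1) 1) (p : ℝ × ℝ) :
    ρ * (ρ * p.1 + √(1 - ρ ^ 2) * p.2) + √(1 - ρ ^ 2) * (√(1 - ρ ^ 2) * p.1 - ρ * p.2) = p.1 := by
  have hs2 : √(1 - ρ ^ 2) ^ 2 = 1 - ρ ^ 2 := sq_sqrt (by nlinarith [hρ.1, hρ.2])
  linear_combination p.1 * hs2

lemma gaussianReal_prod_real_le (hρ : ρ ∈ Icc (-1) 1) (t : ℝ) :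
    𝒩².real {p | ρ * p.1 + √(1 - ρ ^ 2) * p.2 ≤ t} = stdNormalCDF t := by
  rw [← (measurePreserving_corrReflection hρ).measureReal_preimage
    (measurableSet_le (by fun_prop) measurable_const).nullMeasurableSet]
  have : corrReflection ρ ⁻¹' {p | ρ * p.1 + √(1 - ρ ^ 2) * p.2 ≤ t} = Iic t ×ˢ univ := by
    ext p
    simp [corrReflection, corrReflection_involutive_fst hρ]
  rw [this, measureReal_prod_prod, probReal_univ, mul_one, gaussianReal_zero_one_real_apply]
  rfl

lemma gaussianReal_prod_real_le_and_le (hρ : ρ ∈ Ioo (-1) 1) (x y : ℝ) :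
    𝒩².real {p | ρ * p.1 + √(1 - ρ ^ 2) * p.2 ≤ y ∧ p.1 ≤ x} = bivariateNormalCDF ρ x y := by
  rw [← (measurePreserving_corrReflection (Ioo_subset_Icc_self hρ)).measureReal_preimage
    (s := {p | ρ * p.1 + √(1 - ρ ^ 2) * p.2 ≤ y ∧ p.1 ≤ x}) (by measurability)]
  have : corrReflection ρ ⁻¹' {p | ρ * p.1 + √(1 - ρ ^ 2) * p.2 ≤ y ∧ p.1 ≤ x}
      = {p | ρ * p.1 + √(1 - ρ ^ 2) * p.2 ≤ x ∧ p.1 ∈ Iic y} := by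
    ext p
    simp [corrReflection, corrReflection_involutive_fst (Ioo_subset_Icc_self hρ), and_comm]
  rw [this, gaussianReal_prod_real_le_and_mem _ _ (sqrt_pos.2 (by nlinarith [hρ.1, hρ.2]))
    measurableSet_Iic]
  rfl

lemma integral_stdNormalCDF_mul_stdNormalPDF (hρ : ρ ∈ Ioo (-1) 1) (x : ℝ) :
    ∫ u, stdNormalCDF ((x - ρ * u) / √(1 - ρ ^ 2)) * stdNormalPDF u = stdNormalCDF x := by
  rw [← setIntegral_univ, ← gaussianReal_prod_real_le_and_mem _ _
    (sqrt_pos.2 (by nlinarith [hρ.1, hρ.2])) MeasurableSet.univ]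
  simpa using gaussianReal_prod_real_le (Ioo_subset_Icc_self hρ) x

lemma gaussianReal_prod_real_le_and_gt (hρ : ρ ∈ Ioo (-1) 1) (x y : ℝ) :
    𝒩².real {p | ρ * p.1 + √(1 - ρ ^ 2) * p.2 ≤ y ∧ x < p.1}
      = stdNormalCDF y - bivariateNormalCDF ρ x y := by
  have h := measureReal_inter_add_sdiff (μ := 𝒩²) (s := {p | ρ * p.1 + √(1 - ρ ^ 2) * p.2 ≤ y})
    (measurableSet_le measurable_fst (measurable_const (a := x)))
  have hdiff : {p : ℝ × ℝ | ρ * p.1 + √(1 - ρ ^ 2) * p.2 ≤ y} \ {p | p.1 ≤ x}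
      = {p | ρ * p.1 + √(1 - ρ ^ 2) * p.2 ≤ y ∧ x < p.1} := by
    ext p
    simp
  rw [hdiff, gaussianReal_prod_real_le (Ioo_subset_Icc_self hρ)] at h
  rw [← gaussianReal_prod_real_le_and_le hρ x y, ← h]
  exact (add_sub_cancel_left _ _).symm

end GaussianPlane

lemma abs_le_abs_of_hasDerivAt_of_mul_sub_nonneg {H d : ℝ → ℝ} {m : ℝ}
    (hd : ∀ y, HasDerivAt H (d y) y) (hsign : ∀ y, 0 ≤ d y * (y - m))
    (hbot : Tendsto H atBot (𝓝 0)) (htop : Tendsto H atTop (𝓝 0)) (y : ℝ) :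
    |H y| ≤ |H m| := by
  have hcont : ContinuousOn H univ :=
    (continuous_iff_continuousAt.2 fun y => (hd y).continuousAt).continuousOn
  have hanti : AntitoneOn H (Iic m) :=
    antitoneOn_of_hasDerivWithinAt_nonpos (convex_Iic m) (hcont.mono (subset_univ _))
      (fun y _ => (hd y).hasDerivWithinAt) fun y hy => by
        rw [interior_Iic] at hy
        exact nonpos_of_mul_nonneg_left (hsign y) (sub_neg.2 hy)
  have hmono : MonotoneOn H (Ici m) :=
    monotoneOn_of_hasDerivWithinAt_nonneg (convex_Ici m) (hcont.mono (subset_univ _))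
      (fun y _ => (hd y).hasDerivWithinAt) fun y hy => by
        rw [interior_Ici] at hy
        exact nonneg_of_mul_nonneg_left (hsign y) (sub_pos.2 hy)
  have hmin : H m ≤ H y := by
    rcases le_total y m with hy | hy
    · exact hanti hy self_mem_Iic hy
    · exact hmono self_mem_Ici hy hy
  have hnonpos : H y ≤ 0 := by
    rcases le_total y m with hy | hy
    · refine ge_of_tendsto hbot ?_
      filter_upwards [eventually_le_atBot y] with w hw
      exact hanti (hw.trans hy) hy hw
    · refine ge_of_tendsto htop ?_
      filter_upwards [eventually_ge_atTop y] with w hw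
      exact hmono hy (hy.trans hw) hw
  rw [abs_of_nonpos hnonpos, abs_of_nonpos (hmin.trans hnonpos)]
  exact neg_le_neg hmin

lemma hasDerivAt_bivariateNormalCDF (ρ x y : ℝ) :
    HasDerivAt (bivariateNormalCDF ρ x)
      (stdNormalCDF ((x - ρ * y) / √(1 - ρ ^ 2)) * stdNormalPDF y) y :=
  hasDerivAt_setIntegral_Iic ((continuous_stdNormalCDF.comp (by fun_prop)).mul
    continuous_stdNormalPDF) (integrable_stdNormalCDF_comp_mul_stdNormalPDF (by fun_prop)) y

lemma tendsto_bivariateNormalCDF_atBot (ρ x : ℝ) :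
    Tendsto (bivariateNormalCDF ρ x) atBot (𝓝 0) :=
  tendsto_integral_Iic_zero tendsto_id

section Bivariate

variable {ρ : ℝ}

lemma tendsto_bivariateNormalCDF_atTop (hρ : ρ ∈ Ioo (-1) 1) (x : ℝ) :
    Tendsto (bivariateNormalCDF ρ x) atTop (𝓝 (stdNormalCDF x)) := by
  rw [← integral_stdNormalCDF_mul_stdNormalPDF hρ x]
  exact tendsto_setIntegral_Iic_atTop (integrable_stdNormalCDF_comp_mul_stdNormalPDF (by fun_prop))

lemma abs_bivariateNormalCDF_sub_le (hρ : ρ ∈ Ioo (-1) 1) (hρ0 : ρ ≠ 0) (x y : ℝ) :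
    |bivariateNormalCDF ρ x y - stdNormalCDF x * stdNormalCDF y|
      ≤ |bivariateNormalCDF ρ x (ystar ρ x) - stdNormalCDF x * stdNormalCDF (ystar ρ x)| := by
  set s := √(1 - ρ ^ 2)
  have hs : 0 < s := sqrt_pos.2 (by nlinarith [hρ.1, hρ.2])
  set H : ℝ → ℝ := fun y => ρ * (stdNormalCDF x * stdNormalCDF y - bivariateNormalCDF ρ x y)
    with hH
  set d : ℝ → ℝ := fun y => ρ * (stdNormalCDF x - stdNormalCDF ((x - ρ * y) / s)) * stdNormalPDF y
  have hd (y : ℝ) : HasDerivAt H (d y) y :=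
    (((hasDerivAt_stdNormalCDF y).const_mul _).sub
      (hasDerivAt_bivariateNormalCDF ρ x y)).const_mul ρ |>.congr_deriv (by ring)
  have hsign (y : ℝ) : 0 ≤ d y * (y - ystar ρ x) := by
    set z := (x - ρ * y) / s
    have harg : ρ * (y - ystar ρ x) = s * (x - z) := by
      unfold z ystar
      field_simp
      ring
    have hmono : 0 ≤ (stdNormalCDF x - stdNormalCDF z) * (x - z) := by
      rcases le_total x z with h | h
      · exact mul_nonneg_of_nonpos_of_nonpos (sub_nonpos.2 (monotone_stdNormalCDF h))
          (sub_nonpos.2 h)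
      · exact mul_nonneg (sub_nonneg.2 (monotone_stdNormalCDF h)) (sub_nonneg.2 h)
    have : d y * (y - ystar ρ x)
        = s * stdNormalPDF y * ((stdNormalCDF x - stdNormalCDF z) * (x - z)) := by
      linear_combination (stdNormalCDF x - stdNormalCDF z) * stdNormalPDF y * harg
    rw [this]
    exact mul_nonneg (mul_nonneg hs.le (stdNormalPDF_nonneg y)) hmono
  have hlim {l : Filter ℝ} {a : ℝ} (h1 : Tendsto stdNormalCDF l (𝓝 a))
      (h2 : Tendsto (bivariateNormalCDF ρ x) l (𝓝 (stdNormalCDF x * a))) : Tendsto H l (𝓝 0) := by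
    simpa using ((h1.const_mul (stdNormalCDF x)).sub h2).const_mul ρ
  have key := abs_le_abs_of_hasDerivAt_of_mul_sub_nonneg hd hsign
    (hlim tendsto_stdNormalCDF_atBot (by simpa using tendsto_bivariateNormalCDF_atBot ρ x))
    (hlim tendsto_stdNormalCDF_atTop (by simpa using tendsto_bivariateNormalCDF_atTop hρ x)) y
  rw [hH, abs_mul, abs_mul, abs_sub_comm, abs_sub_comm (stdNormalCDF x * _)] at key
  exact le_of_mul_le_mul_left key (abs_pos.2 hρ0)

end Bivariate

section Transfer

variable {Ω : Type*} [MeasurableSpace Ω] {μ : Measure Ω} {U V : Ω → ℝ} {ρ : ℝ}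

lemma measureReal_div_sub_measureReal_div (hU : Measurable U) (hV : Measurable V)
    (hlaw : μ.map (fun ω => (U ω, V ω)) = 𝒩²) (hρ : ρ ∈ Ioo (-1) 1) (x y : ℝ) :
    μ.real {ω | ρ * U ω + √(1 - ρ ^ 2) * V ω ≤ y ∧ x < U ω} / μ.real {ω | x < U ω}
      - μ.real {ω | ρ * U ω + √(1 - ρ ^ 2) * V ω ≤ y ∧ U ω ≤ x} / μ.real {ω | U ω ≤ x}
      = (stdNormalCDF x * (1 - stdNormalCDF x))⁻¹
          * (stdNormalCDF x * stdNormalCDF y - bivariateNormalCDF ρ x y) := by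
  have hpair {S : Set (ℝ × ℝ)} (hS : MeasurableSet S) :
      μ.real {ω | (U ω, V ω) ∈ S} = 𝒩².real S := by
    rw [← hlaw, map_measureReal_apply (hU.prodMk hV) hS]
    rfl
  have hU_law {S : Set ℝ} (hS : MeasurableSet S) :
      μ.real {ω | U ω ∈ S} = (gaussianReal 0 1).real S := by
    rw [← Measure.fst_prod (μ := gaussianReal 0 1) (ν := gaussianReal 0 1), ← hlaw,
      Measure.fst_map_prodMk hV, map_measureReal_apply hU hS]
    rfl
  have hgt : μ.real {ω | ρ * U ω + √(1 - ρ ^ 2) * V ω ≤ y ∧ x < U ω}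
      = stdNormalCDF y - bivariateNormalCDF ρ x y :=
    (hpair (by measurability)).trans (gaussianReal_prod_real_le_and_gt hρ x y)
  have hle : μ.real {ω | ρ * U ω + √(1 - ρ ^ 2) * V ω ≤ y ∧ U ω ≤ x}
      = bivariateNormalCDF ρ x y :=
    (hpair (by measurability)).trans (gaussianReal_prod_real_le_and_le hρ x y)
  have hU_gt : μ.real {ω | x < U ω} = 1 - stdNormalCDF x :=
    (hU_law measurableSet_Ioi).trans
      ((gaussianReal_zero_one_real_apply _).trans (one_sub_stdNormalCDF x).symm)
  have hU_le : μ.real {ω | U ω ≤ x} = stdNormalCDF x :=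
    (hU_law measurableSet_Iic).trans (gaussianReal_zero_one_real_apply _)
  have hΦ0 : stdNormalCDF x ≠ 0 := (stdNormalCDF_pos x).ne'
  have hΦ1 : 1 - stdNormalCDF x ≠ 0 := (sub_pos.2 (stdNormalCDF_lt_one x)).ne'
  rw [hgt, hle, hU_gt, hU_le]
  field_simp
  ring

end Transfer

/-- For a bivariate standard normal pair `(X,Y)` with correlation
`ρ ∈ (−1,1)`, `ρ ≠ 0`, realized as `X = U`, `Y = ρU + √(1−ρ²)V` with `U, V` independent
standard normals, the Kolmogorov dependence statistic satisfies
`k(x) = sup_y |P(Y ≤ y | X > x) − P(Y ≤ y | X ≤ x)|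
      = (Φ(x)(1−Φ(x)))⁻¹ |∫_{−∞}^{y*} Φ((x−ρu)/√(1−ρ²)) φ(u) du − Φ(x)Φ(y*)|`,
where conditional probabilities are the ratios `P(Y ≤ y, A)/P(A)`. -/
theorem stmt8 {Ω : Type*} [MeasurableSpace Ω] (μ : Measure Ω) [IsProbabilityMeasure μ]
    (U V : Ω → ℝ) (hU : Measurable U) (hV : Measurable V)
    (hUdist : Measure.map U μ = ProbabilityTheory.gaussianReal 0 1)
    (hVdist : Measure.map V μ = ProbabilityTheory.gaussianReal 0 1)
    (hUV : ProbabilityTheory.IndepFun U V μ)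
    (ρ : ℝ) (hρ : ρ ∈ Set.Ioo (-1 : ℝ) 1) (hρ0 : ρ ≠ 0) (x : ℝ)
    (Y : Ω → ℝ) (hY : Y = fun ω => ρ * U ω + Real.sqrt (1 - ρ ^ 2) * V ω) :
    (⨆ y : ℝ,
        |(μ {ω | Y ω ≤ y ∧ x < U ω}).toReal / (μ {ω | x < U ω}).toReal
          - (μ {ω | Y ω ≤ y ∧ U ω ≤ x}).toReal / (μ {ω | U ω ≤ x}).toReal|)
      = (stdNormalCDF x * (1 - stdNormalCDF x))⁻¹ *
          |(∫ u in Set.Iic (ystar ρ x),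
              stdNormalCDF ((x - ρ * u) / Real.sqrt (1 - ρ ^ 2)) * stdNormalPDF u)
            - stdNormalCDF x * stdNormalCDF (ystar ρ x)| := by
  subst hY
  have hlaw : μ.map (fun ω => (U ω, V ω)) = 𝒩² := by
    rw [(indepFun_iff_map_prod_eq_prod_map_map hU.aemeasurable hV.aemeasurable).mp hUV,
      hUdist, hVdist]
  have hΦ : 0 < stdNormalCDF x * (1 - stdNormalCDF x) :=
    mul_pos (stdNormalCDF_pos x) (sub_pos.2 (stdNormalCDF_lt_one x))
  simp only [← measureReal_def, measureReal_div_sub_measureReal_div hU hV hlaw hρ, abs_mul,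
    abs_of_pos (inv_pos.2 hΦ), abs_sub_comm (stdNormalCDF x * _)]
  exact ciSup_eq_of_forall_le_of_forall_lt_exists_gt
    (fun y => mul_le_mul_of_nonneg_left (abs_bivariateNormalCDF_sub_le hρ hρ0 x y)
      (inv_pos.2 hΦ).le) fun _ hw => ⟨ystar ρ x, hw⟩
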